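/- arXiv:1910.03210 — 2 statements merged into one kernel-verified Lean document; each statement's English description precedes it below -/
import Mathlib

section
/- For every integer N ≥ 1 and every index i with 0 ≤ i < 4^N−1, the nodes h_N(i) and h_N(i+1) are edge connected, i.e., their Euclidean distance equals 1. -/
/-- The `N`-th order approximated Hilbert curve, mapping indices `{0,...,4^N-1}`
to nodes of the grid `{0,...,2^N-1} × {0,...,2^N-1} ⊆ ℤ × ℤ`. -/
def hilbert : ℕ → ℕ → ℤ × ℤ
  | 0, _ => (0, 0)
  | 1, i =>
    if i = 0 then (0, 0)
    else if i = 1 then (0, 1)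
    else if i = 2 then (1, 1)
    else (1, 0)
  | N + 2, i =>
    let q := i / 4 ^ (N + 1)
    let s : ℤ := 2 ^ (N + 1)
    let p := hilbert (N + 1) (i % 4 ^ (N + 1))
    if q = 0 then (p.2, p.1)
    else if q = 1 then (p.1, p.2 + s)
    else if q = 2 then (p.1 + s, p.2 + s)
    else (2 * s - 1 - p.2, s - 1 - p.1)

/-- Euclidean distance between two points of `ℤ × ℤ`. -/
noncomputable def euclDist (a b : ℤ × ℤ) : ℝ :=
  Real.sqrt (((a.1 - b.1 : ℤ) : ℝ) ^ 2 + ((a.2 - b.2 : ℤ) : ℝ) ^ 2)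

/-- Two points of `ℤ × ℤ` are edge connected if their Euclidean distance equals 1. -/
def EdgeConnected (a b : ℤ × ℤ) : Prop := euclDist a b = 1

/-- Two points of `ℤ × ℤ` are vertex connected if both coordinates differ by exactly 1. -/
def VertexConnected (a b : ℤ × ℤ) : Prop := |a.1 - b.1| = 1 ∧ |a.2 - b.2| = 1

/-- Membership in the grid `{0,...,2^N-1} × {0,...,2^N-1}`. -/
def InGrid (N : ℕ) (p : ℤ × ℤ) : Prop :=
  0 ≤ p.1 ∧ p.1 ≤ 2 ^ N - 1 ∧ 0 ≤ p.2 ∧ p.2 ≤ 2 ^ N - 1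

/-- The closed segment from `u` to `v` (centres of cells, viewed in `ℝ²`) is disjoint
from the open unit cell centred at `c`. -/
def SegAvoidsCell (u v c : ℤ × ℤ) : Prop :=
  ∀ t : ℝ, t ∈ Set.Icc (0 : ℝ) 1 →
    ¬ (|(1 - t) * (u.1 : ℝ) + t * (v.1 : ℝ) - (c.1 : ℝ)| < 1 / 2 ∧
       |(1 - t) * (u.2 : ℝ) + t * (v.2 : ℝ) - (c.2 : ℝ)| < 1 / 2)

/-- An evasion tour for the blocked index set `B` on the `N`-th order Hilbert grid:
a sequence of waypoints `w 0, ..., w m` in the grid, starting at the entry node,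
ending at the exit node, avoiding all blocked nodes, covering every unblocked grid
point, and whose straight-line segments avoid the interiors of all blocked cells. -/
def IsEvasionTour (N : ℕ) (B : Finset ℕ) (m : ℕ) (w : ℕ → ℤ × ℤ) : Prop :=
  w 0 = hilbert N 0 ∧
  w m = hilbert N (4 ^ N - 1) ∧
  (∀ j ≤ m, InGrid N (w j)) ∧
  (∀ j ≤ m, ∀ b ∈ B, w j ≠ hilbert N b) ∧
  (∀ p : ℤ × ℤ, InGrid N p → (∀ b ∈ B, p ≠ hilbert N b) → ∃ j ≤ m, w j = p) ∧
  (∀ j < m, ∀ b ∈ B, SegAvoidsCell (w j) (w (j + 1)) (hilbert N b))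

/-!
Each quarter of `h_{N+1}` is an isometric copy of `h_N`,
so consecutive nodes inside one quarter are at distance 1 by induction. Where the curve
passes from quarter `q` to quarter `q + 1`, it goes from the image of the exit node
`h_N(4^N - 1) = (2^N - 1, 0)` to the image of the entry node `h_N(0) = (0, 0)`, and for each
of the three transitions these two images are neighbouring grid points.
-/

def hilbertQuadrant (s : ℤ) (q : ℕ) (p : ℤ × ℤ) : ℤ × ℤ :=
  if q = 0 then (p.2, p.1)
  else if q = 1 then (p.1, p.2 + s)
  else if q = 2 then (p.1 + s, p.2 + s)
  else (2 * s - 1 - p.2, s - 1 - p.1)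

def sqDist (a b : ℤ × ℤ) : ℤ := (a.1 - b.1) ^ 2 + (a.2 - b.2) ^ 2

lemma edgeConnected_iff_sqDist_eq_one {a b : ℤ × ℤ} : EdgeConnected a b ↔ sqDist a b = 1 := by
  rw [EdgeConnected, euclDist, Real.sqrt_eq_one, sqDist]
  exact_mod_cast Iff.rfl

lemma sqDist_hilbertQuadrant (s : ℤ) (q : ℕ) (a b : ℤ × ℤ) :
    sqDist (hilbertQuadrant s q a) (hilbertQuadrant s q b) = sqDist a b := by
  unfold hilbertQuadrant sqDist
  split_ifs <;> ring

/-- `(s - 1, 0)` and `(0, 0)` are the last and first nodes of a sub-curve of side `s`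
(`hilbert_last`, `hilbert_zero`). -/
lemma sqDist_hilbertQuadrant_exit_entry (s : ℤ) {q : ℕ} (hq : q < 3) :
    sqDist (hilbertQuadrant s q (s - 1, 0)) (hilbertQuadrant s (q + 1) (0, 0)) = 1 := by
  interval_cases q
  all_goals simp [hilbertQuadrant, sqDist]
  ring

lemma hilbert_add_two (N q r : ℕ) (hr : r < 4 ^ (N + 1)) :
    hilbert (N + 2) (q * 4 ^ (N + 1) + r) =
      hilbertQuadrant (2 ^ (N + 1)) q (hilbert (N + 1) r) := by
  have hpos : 0 < 4 ^ (N + 1) := by positivity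
  have hdiv : (q * 4 ^ (N + 1) + r) / 4 ^ (N + 1) = q := by
    rw [Nat.add_comm, Nat.add_mul_div_right _ _ hpos, Nat.div_eq_of_lt hr, Nat.zero_add]
  simp only [hilbert, hdiv, Nat.mul_add_mod_of_lt hr, hilbertQuadrant]

lemma hilbert_zero : ∀ N, hilbert N 0 = (0, 0)
  | 0 | 1 => rfl
  | N + 2 => by
    simpa [hilbertQuadrant, hilbert_zero (N + 1)] using hilbert_add_two N 0 0 (by positivity)

lemma hilbert_last (N : ℕ) : hilbert (N + 1) (4 ^ (N + 1) - 1) = (2 ^ (N + 1) - 1, 0) := by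
  induction N with
  | zero => rfl
  | succ N ih =>
    have hsplit : 4 ^ (N + 2) - 1 = 3 * 4 ^ (N + 1) + (4 ^ (N + 1) - 1) := by
      have : 0 < 4 ^ (N + 1) := by positivity
      rw [pow_succ]; omega
    rw [hsplit, hilbert_add_two N 3 _ (Nat.sub_lt (by positivity) one_pos), ih]
    norm_num [hilbertQuadrant, pow_succ]
    ring

lemma sqDist_hilbert_succ (N i : ℕ) (hi : i + 1 < 4 ^ (N + 1)) :
    sqDist (hilbert (N + 1) i) (hilbert (N + 1) (i + 1)) = 1 := by
  induction N generalizing i with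
  | zero =>
    obtain hi : i < 3 := by norm_num at hi; omega
    interval_cases i <;> rfl
  | succ N ih =>
    have hpos : 0 < 4 ^ (N + 1) := by positivity
    obtain ⟨q, r, hr, rfl⟩ : ∃ q r, r < 4 ^ (N + 1) ∧ i = q * 4 ^ (N + 1) + r :=
      ⟨i / 4 ^ (N + 1), i % 4 ^ (N + 1), Nat.mod_lt _ hpos, (Nat.div_add_mod' i _).symm⟩
    rw [hilbert_add_two N q r hr]
    by_cases hr' : r + 1 < 4 ^ (N + 1)
    · rw [Nat.add_assoc (q * 4 ^ (N + 1)) r 1, hilbert_add_two N q (r + 1) hr',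
        sqDist_hilbertQuadrant, ih r hr']
    · obtain rfl : r = 4 ^ (N + 1) - 1 := by omega
      have hq : q < 3 := by
        by_contra! hq
        have := Nat.mul_le_mul_right (4 ^ (N + 1)) hq
        rw [pow_succ 4 (N + 1)] at hi
        omega
      have hnext : q * 4 ^ (N + 1) + (4 ^ (N + 1) - 1) + 1 = (q + 1) * 4 ^ (N + 1) + 0 := by
        rw [Nat.succ_mul]; omega
      rw [hnext, hilbert_add_two N (q + 1) 0 hpos, hilbert_last, hilbert_zero]
      exact sqDist_hilbertQuadrant_exit_entry _ hq

theorem hilbert_consecutive_edgeConnected (N i : ℕ) (hN : 1 ≤ N) (hi : i < 4 ^ N - 1) :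
    EdgeConnected (hilbert N i) (hilbert N (i + 1)) := by
  obtain ⟨N, rfl⟩ := Nat.exists_eq_add_of_le' hN
  exact edgeConnected_iff_sqDist_eq_one.2 (sqDist_hilbert_succ N i (by omega))
end

section
/- Every straight node is a corner node: if N ≥ 1 and i is an index with 1 ≤ i ≤ 4^N−2 such that h_N(i+1) − h_N(i) = h_N(i) − h_N(i−1) (the curve passes straight through node i), then i mod 4 ∈ {0, 3}. -/
/-!
An index `i ≡ 1, 2 (mod 4)` is never the first or last index of a quarter of the order-`N+1`
curve, so `i - 1`, `i`, `i + 1` lie in one quarter. That quarter is an isometric copy of the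
order-`N` curve, so straightness at `i` would already occur at order `N`; by induction it would
occur at order `1`, whose curve turns at both indices `1` and `2`.
-/

/-- Quarter `q` of the order-`N+1` curve as the image of the order-`N` curve, with `s = 2 ^ N`. -/
def hilbertQuarter (s : ℤ) (q : ℕ) (p : ℤ × ℤ) : ℤ × ℤ :=
  if q = 0 then (p.2, p.1)
  else if q = 1 then (p.1, p.2 + s)
  else if q = 2 then (p.1 + s, p.2 + s)
  else (2 * s - 1 - p.2, s - 1 - p.1)

lemma hilbert_add_two_s10 (N i : ℕ) :
    hilbert (N + 2) i =
      hilbertQuarter (2 ^ (N + 1)) (i / 4 ^ (N + 1)) (hilbert (N + 1) (i % 4 ^ (N + 1))) := by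
  rw [hilbert]; rfl

lemma hilbert_add_two_mul_add (N q r : ℕ) (hr : r < 4 ^ (N + 1)) :
    hilbert (N + 2) (4 ^ (N + 1) * q + r) = hilbertQuarter (2 ^ (N + 1)) q (hilbert (N + 1) r) := by
  have hpos : 0 < 4 ^ (N + 1) := by positivity
  rw [hilbert_add_two_s10, Nat.mul_add_div hpos, Nat.div_eq_of_lt hr, add_zero, Nat.mul_add_mod,
    Nat.mod_eq_of_lt hr]

lemma hilbertQuarter_sub_eq_sub_iff (s : ℤ) (q : ℕ) (a b c d : ℤ × ℤ) :
    hilbertQuarter s q a - hilbertQuarter s q b = hilbertQuarter s q c - hilbertQuarter s q d ↔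
      a - b = c - d := by
  simp only [hilbertQuarter, Prod.ext_iff, Prod.fst_sub, Prod.snd_sub]
  split_ifs <;> constructor <;> rintro ⟨h₁, h₂⟩ <;> constructor <;> linarith

lemma hilbert_one_not_straight (i : ℕ) (hi : i = 1 ∨ i = 2) :
    hilbert 1 (i + 1) - hilbert 1 i ≠ hilbert 1 i - hilbert 1 (i - 1) := by
  rcases hi with rfl | rfl <;> decide

lemma hilbert_not_straight (N i : ℕ) (hi : i % 4 = 1 ∨ i % 4 = 2) (hlt : i + 1 < 4 ^ (N + 1)) :
    hilbert (N + 1) (i + 1) - hilbert (N + 1) i ≠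
      hilbert (N + 1) i - hilbert (N + 1) (i - 1) := by
  induction N generalizing i with
  | zero => exact hilbert_one_not_straight i (by omega)
  | succ N ih =>
    set M := 4 ^ (N + 1)
    have hM : 4 ∣ M := dvd_pow_self 4 N.succ_ne_zero
    have hMpos : 0 < M := by positivity
    obtain ⟨q, r, hr, hr4, rfl⟩ : ∃ q r, r < M ∧ r % 4 = i % 4 ∧ M * q + r = i :=
      ⟨i / M, i % M, Nat.mod_lt i hMpos, Nat.mod_mod_of_dvd i hM, Nat.div_add_mod i M⟩
    have hsucc : M * q + r + 1 = M * q + (r + 1) := rfl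
    have hpred : M * q + r - 1 = M * q + (r - 1) := by omega
    rw [hsucc, hpred, hilbert_add_two_mul_add N q (r + 1) (by omega),
      hilbert_add_two_mul_add N q r hr, hilbert_add_two_mul_add N q (r - 1) (by omega),
      Ne, hilbertQuarter_sub_eq_sub_iff]
    exact ih r (by omega) (by omega)

theorem hilbert_straight_is_corner_general (N i : ℕ) (hN : 1 ≤ N)
    (h2 : i ≤ 4 ^ N - 2)
    (hstraight : hilbert N (i + 1) - hilbert N i = hilbert N i - hilbert N (i - 1)) :
    i % 4 = 0 ∨ i % 4 = 3 := by
  obtain ⟨N, rfl⟩ : ∃ M, N = M + 1 := ⟨N - 1, by omega⟩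
  have h4 : 4 ≤ 4 ^ (N + 1) := Nat.le_self_pow N.succ_ne_zero 4
  by_contra hcorner
  exact hilbert_not_straight N i (by omega) (by omega) hstraight

theorem hilbert_straight_is_corner (N i : ℕ) (hN : 1 ≤ N) (h1 : 1 ≤ i)
    (h2 : i ≤ 4 ^ N - 2)
    (hstraight : hilbert N (i + 1) - hilbert N i = hilbert N i - hilbert N (i - 1)) :
    i % 4 = 0 ∨ i % 4 = 3 :=
  hilbert_straight_is_corner_general N i hN h2 hstraight
end
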